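/- Let (X,φ) be an expansive dynamical system equipped with an adapted metric (with contraction constant 0 < λ < 1 and constant η > 0). Fix 0 < ε₀ ≤ η and suppose (x,x) lies in the interior of D_{ε₀}. Then for every ε > 0 there exists δ > 0 such that whenever d(x,y) < δ and d(x,z) < δ, the bracket [y,z] is defined and satisfies [y,z] ∈ Xˢ(y,ε) ∩ Xᵘ(z,ε). -/

import Mathlib

/-!
Since `ε₀ ≤ εX`, expansiveness gives `Xˢ(x, ε₀) ∩ Xᵘ(x, ε₀) = {x}`. Both conditions are closed,
so by compactness (the projection `X × X × X → X × X` is closed) the bracket `[y, z]` tends to `x`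
as `(y, z) → (x, x)`. In an adapted metric forward orbits inside `Xˢ(·, η)` do not spread apart,
so `d(y, [y, z]) < ε` already puts `[y, z]` in `Xˢ(y, ε)`; symmetrically for `Xᵘ(z, ε)`.
-/

open Filter Topology Set

namespace Paper

variable {X : Type*} [MetricSpace X] [CompactSpace X]

/-- The `n`-th iterate (for `n : ℤ`) of the homeomorphism `φ`. -/
def It (φ : X ≃ₜ X) (n : ℤ) : X → X := fun x => (φ.toEquiv ^ n) x

/-- The local stable set `Xˢ(x, ε)`. -/
def locS (φ : X ≃ₜ X) (x : X) (ε : ℝ) : Set X :=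
  {y | ∀ n : ℕ, dist (It φ n x) (It φ n y) ≤ ε}

/-- The local unstable set `Xᵘ(x, ε)`. -/
def locU (φ : X ≃ₜ X) (x : X) (ε : ℝ) : Set X :=
  {y | ∀ n : ℕ, dist (It φ (-(n : ℤ)) x) (It φ (-(n : ℤ)) y) ≤ ε}

/-- The set `D_ε` on which the bracket is defined. -/
def Dset (φ : X ≃ₜ X) (ε : ℝ) : Set (X × X) :=
  {p | (locS φ p.1 ε ∩ locU φ p.2 ε).Nonempty}

/-- `(X, φ)` is expansive with expansiveness constant `εX`. -/
def IsExpansive (φ : X ≃ₜ X) (εX : ℝ) : Prop :=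
  0 < εX ∧ ∀ x y : X, (∀ n : ℤ, dist (It φ n x) (It φ n y) ≤ εX) → x = y

/-- The metric is adapted (Fried), with constants `η` and `lam`. -/
def IsAdapted (φ : X ≃ₜ X) (η lam : ℝ) : Prop :=
  0 < η ∧ 0 < lam ∧ lam < 1 ∧
    (∀ x y : X, y ∈ locS φ x η → dist (φ x) (φ y) ≤ lam * dist x y) ∧
    (∀ x y : X, y ∈ locU φ x η → dist (φ.symm x) (φ.symm y) ≤ lam * dist x y)

/-- `p` is a periodic point of `φ`. -/
def IsPeriodic (φ : X ≃ₜ X) (p : X) : Prop :=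
  ∃ n : ℕ, 1 ≤ n ∧ It φ n p = p

/-- `x` is a synchronizing point: `(x, x)` is in the interior of `D_ε` for
some `0 < ε ≤ ε₀`. -/
def IsSyncPt (φ : X ≃ₜ X) (ε₀ : ℝ) (x : X) : Prop :=
  ∃ ε : ℝ, 0 < ε ∧ ε ≤ ε₀ ∧ (x, x) ∈ interior (Dset φ ε)

/-- `(X, φ)` is irreducible. -/
def Irred (φ : X ≃ₜ X) : Prop :=
  ∀ U V : Set X, IsOpen U → IsOpen V → U.Nonempty → V.Nonempty →
    ∃ n : ℕ, 0 < n ∧ (It φ n '' U ∩ V).Nonempty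

/-- `(X, φ)` is mixing. -/
def Mixing (φ : X ≃ₜ X) : Prop :=
  ∀ U V : Set X, IsOpen U → IsOpen V → U.Nonempty → V.Nonempty →
    ∃ N : ℕ, ∀ n : ℕ, N ≤ n → (It φ n '' U ∩ V).Nonempty

/-- Every point of `(X, φ)` is non-wandering. -/
def NonWandering (φ : X ≃ₜ X) : Prop :=
  ∀ x : X, ∀ U ∈ 𝓝 x, ∃ n : ℕ, 0 < n ∧ (It φ n '' U ∩ U).Nonempty

/-- Stable equivalence `x ∼ₛ y`. -/
def StableEq (φ : X ≃ₜ X) (x y : X) : Prop :=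
  Tendsto (fun n : ℕ => dist (It φ n x) (It φ n y)) atTop (𝓝 0)

/-- Unstable equivalence `x ∼ᵤ y`. -/
def UnstableEq (φ : X ≃ₜ X) (x y : X) : Prop :=
  Tendsto (fun n : ℕ => dist (It φ (-(n : ℤ)) x) (It φ (-(n : ℤ)) y)) atTop (𝓝 0)

/-- Local conjugacy `x ∼_lc y`: a homeomorphism `γ : U → V` of open
neighborhoods with `γ x = y` and `sup_{z ∈ U} d(φⁿ z, φⁿ (γ z)) → 0` as
`n → ±∞`. -/
def LocConj (φ : X ≃ₜ X) (x y : X) : Prop :=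
  ∃ (U V : Set X) (γ γinv : X → X),
    IsOpen U ∧ IsOpen V ∧ x ∈ U ∧ y ∈ V ∧ γ x = y ∧
    Set.MapsTo γ U V ∧ Set.MapsTo γinv V U ∧
    (∀ z ∈ U, γinv (γ z) = z) ∧ (∀ w ∈ V, γ (γinv w) = w) ∧
    ContinuousOn γ U ∧ ContinuousOn γinv V ∧
    (∀ ε : ℝ, 0 < ε → ∃ N : ℕ, ∀ n : ℤ, (N : ℤ) ≤ |n| → ∀ z ∈ U,
      dist (It φ n z) (It φ n (γ z)) ≤ ε)

/-- Stable local conjugacy `x ∼_lcs y`: a homeomorphism of `Xᵘ(x, δ)` onto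
its image in `Xᵘ(y, δ')` sending `x` to `y`, uniformly asymptotic in forward
time. -/
def StableLC (φ : X ≃ₜ X) (x y : X) : Prop :=
  ∃ (δ δ' : ℝ) (γ : X → X), 0 < δ ∧ 0 < δ' ∧
    Set.MapsTo γ (locU φ x δ) (locU φ y δ') ∧
    Set.InjOn γ (locU φ x δ) ∧ ContinuousOn γ (locU φ x δ) ∧ γ x = y ∧
    (∀ ε : ℝ, 0 < ε → ∃ N : ℕ, ∀ n : ℕ, N ≤ n → ∀ z ∈ locU φ x δ,
      dist (It φ n z) (It φ n (γ z)) ≤ ε)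

/-- Unstable local conjugacy `x ∼_lcu y`: a homeomorphism of `Xˢ(x, δ)` onto
its image in `Xˢ(y, δ')` sending `x` to `y`, uniformly asymptotic in backward
time. -/
def UnstableLC (φ : X ≃ₜ X) (x y : X) : Prop :=
  ∃ (δ δ' : ℝ) (γ : X → X), 0 < δ ∧ 0 < δ' ∧
    Set.MapsTo γ (locS φ x δ) (locS φ y δ') ∧
    Set.InjOn γ (locS φ x δ) ∧ ContinuousOn γ (locS φ x δ) ∧ γ x = y ∧
    (∀ ε : ℝ, 0 < ε → ∃ N : ℕ, ∀ n : ℕ, N ≤ n → ∀ z ∈ locS φ x δ,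
      dist (It φ (-(n : ℤ)) z) (It φ (-(n : ℤ)) (γ z)) ≤ ε)

end Paper

namespace Paper

variable {X : Type*} [MetricSpace X]

theorem It_eq_coe_zpow (φ : X ≃ₜ X) (n : ℤ) : It φ n = ⇑(φ ^ n) := by
  let toPerm : (X ≃ₜ X) →* Equiv.Perm X :=
    { toFun := Homeomorph.toEquiv, map_one' := rfl, map_mul' := fun _ _ => rfl }
  exact congrArg DFunLike.coe (map_zpow toPerm φ n).symm

theorem It_add (φ : X ≃ₜ X) (m k : ℤ) (x : X) : It φ m (It φ k x) = It φ (m + k) x := by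
  simp only [It_eq_coe_zpow, zpow_add, Homeomorph.mul_apply]

theorem It_natCast_succ (φ : X ≃ₜ X) (n : ℕ) (x : X) :
    It φ ((n + 1 : ℕ) : ℤ) x = φ (It φ n x) := by
  rw [Nat.cast_succ, add_comm, ← It_add]
  simp [It]

theorem It_symm (φ : X ≃ₜ X) (n : ℤ) : It φ.symm n = It φ (-n) := by
  rw [It_eq_coe_zpow, It_eq_coe_zpow, zpow_neg, ← inv_zpow]
  rfl

theorem continuous_It (φ : X ≃ₜ X) (n : ℤ) : Continuous (It φ n) := by
  rw [It_eq_coe_zpow]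
  exact (φ ^ n).continuous

theorem locU_eq_locS_symm (φ : X ≃ₜ X) (x : X) (ε : ℝ) : locU φ x ε = locS φ.symm x ε := by
  simp [locU, locS, It_symm]

theorem IsAdapted.symm {φ : X ≃ₜ X} {η lam : ℝ} (had : IsAdapted φ η lam) :
    IsAdapted φ.symm η lam := by
  obtain ⟨hη, hlam, hlam1, hS, hU⟩ := had
  exact ⟨hη, hlam, hlam1, fun x y hy => hU x y (by rwa [locU_eq_locS_symm]),
    fun x y hy => hS x y (by rwa [locU_eq_locS_symm, φ.symm_symm] at hy)⟩

theorem It_mem_locS {φ : X ≃ₜ X} {y w : X} {ε : ℝ} (h : w ∈ locS φ y ε) (k : ℕ) :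
    It φ k w ∈ locS φ (It φ k y) ε := by
  intro n
  simpa only [It_add, Nat.cast_add] using h (n + k)

theorem IsAdapted.dist_It_le {φ : X ≃ₜ X} {η lam : ℝ} (had : IsAdapted φ η lam) {y w : X}
    (h : w ∈ locS φ y η) (n : ℕ) : dist (It φ n y) (It φ n w) ≤ dist y w := by
  induction n with
  | zero => simp [It]
  | succ k ih =>
    rw [It_natCast_succ, It_natCast_succ]
    calc dist (φ (It φ k y)) (φ (It φ k w))
        ≤ lam * dist (It φ k y) (It φ k w) := had.2.2.2.1 _ _ (It_mem_locS h k)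
      _ ≤ dist (It φ k y) (It φ k w) := mul_le_of_le_one_left dist_nonneg had.2.2.1.le
      _ ≤ dist y w := ih

theorem IsAdapted.mem_locS_of_dist_le {φ : X ≃ₜ X} {η lam ε : ℝ} (had : IsAdapted φ η lam)
    {y w : X} (h : w ∈ locS φ y η) (hε : dist y w ≤ ε) : w ∈ locS φ y ε :=
  fun n => (had.dist_It_le h n).trans hε

theorem IsAdapted.mem_locU_of_dist_le {φ : X ≃ₜ X} {η lam ε : ℝ} (had : IsAdapted φ η lam)
    {y w : X} (h : w ∈ locU φ y η) (hε : dist y w ≤ ε) : w ∈ locU φ y ε := by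
  rw [locU_eq_locS_symm] at h ⊢
  exact had.symm.mem_locS_of_dist_le h hε

theorem isClosed_setOf_mem_locS (φ : X ≃ₜ X) (ε : ℝ) :
    IsClosed {p : X × X | p.2 ∈ locS φ p.1 ε} := by
  show IsClosed {p : X × X | ∀ n : ℕ, dist (It φ n p.1) (It φ n p.2) ≤ ε}
  rw [Set.ofPred_forall]
  exact isClosed_iInter fun n =>
    isClosed_le (((continuous_It φ n).comp continuous_fst).dist
      ((continuous_It φ n).comp continuous_snd)) continuous_const

theorem isClosed_setOf_mem_locU (φ : X ≃ₜ X) (ε : ℝ) :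
    IsClosed {p : X × X | p.2 ∈ locU φ p.1 ε} := by
  simpa only [locU_eq_locS_symm] using isClosed_setOf_mem_locS φ.symm ε

theorem IsExpansive.eq_of_mem_locS_of_mem_locU {φ : X ≃ₜ X} {εX ε : ℝ} (hexp : IsExpansive φ εX)
    (hε : ε ≤ εX) {x y : X} (hS : y ∈ locS φ x ε) (hU : y ∈ locU φ x ε) : y = x := by
  refine (hexp.2 x y fun n => ?_).symm
  obtain ⟨m, rfl | rfl⟩ := n.eq_nat_or_neg
  · exact (hS m).trans hε
  · exact (hU m).trans hε

theorem tendsto_nhds_of_eventually_mem_of_isClosed {Z Y : Type*} [TopologicalSpace Z]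
    [TopologicalSpace Y] [CompactSpace Y] {K : Set (Z × Y)} (hK : IsClosed K) {z₀ : Z} {y₀ : Y}
    (hfiber : ∀ y, (z₀, y) ∈ K → y = y₀) {f : Z → Y} (hf : ∀ᶠ z in 𝓝 z₀, (z, f z) ∈ K) :
    Tendsto f (𝓝 z₀) (𝓝 y₀) := by
  refine tendsto_nhds.2 fun s hs hy₀ => ?_
  have hC : IsClosed (Prod.fst '' (K ∩ Prod.snd ⁻¹' sᶜ)) :=
    isClosedMap_fst_of_compactSpace _ (hK.inter (hs.isClosed_compl.preimage continuous_snd))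
  have hz₀ : z₀ ∉ Prod.fst '' (K ∩ Prod.snd ⁻¹' sᶜ) := by
    rintro ⟨⟨z, y⟩, ⟨hzy, hys⟩, rfl⟩
    exact hys (hfiber y hzy ▸ hy₀)
  filter_upwards [hC.isOpen_compl.mem_nhds hz₀, hf] with z hzC hzK
  by_contra hzs
  exact hzC ⟨(z, f z), ⟨hzK, hzs⟩, rfl⟩

variable [CompactSpace X]

theorem IsExpansive.tendsto_bracket {φ : X ≃ₜ X} {εX ε : ℝ} (hexp : IsExpansive φ εX)
    (hε : ε ≤ εX) {x : X} {br : X → X → X}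
    (hbr : ∀ᶠ p in 𝓝 (x, x), br p.1 p.2 ∈ locS φ p.1 ε ∩ locU φ p.2 ε) :
    Tendsto (fun p : X × X => br p.1 p.2) (𝓝 (x, x)) (𝓝 x) := by
  refine tendsto_nhds_of_eventually_mem_of_isClosed (K := {q : (X × X) × X |
    q.2 ∈ locS φ q.1.1 ε ∩ locU φ q.1.2 ε}) ?_ ?_ hbr
  · exact ((isClosed_setOf_mem_locS φ ε).preimage (continuous_fst.fst.prodMk continuous_snd)).inter
      ((isClosed_setOf_mem_locU φ ε).preimage (continuous_fst.snd.prodMk continuous_snd))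
  · exact fun y ⟨hS, hU⟩ => hexp.eq_of_mem_locS_of_mem_locU hε hS hU

theorem bracket_epsilon_continuity_general (φ : X ≃ₜ X) (εX η lam : ℝ)
    (hexp : IsExpansive φ εX) (had : IsAdapted φ η lam)
    (ε₀ : ℝ) (hε₀η : ε₀ ≤ η) (hε₀X : ε₀ ≤ εX / 2) (x : X)
    (hx : (x, x) ∈ interior (Dset φ ε₀)) (br : X → X → X)
    (hbr : ∀ y z : X, (y, z) ∈ Dset φ ε₀ → br y z ∈ locS φ y ε₀ ∩ locU φ z ε₀) :
    ∀ ε : ℝ, 0 < ε → ∃ δ : ℝ, 0 < δ ∧ ∀ y z : X, dist x y < δ → dist x z < δ →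
      (y, z) ∈ Dset φ ε₀ ∧ br y z ∈ locS φ y ε ∩ locU φ z ε := by
  intro ε hε
  have hD : ∀ᶠ p in 𝓝 (x, x), p ∈ Dset φ ε₀ := mem_interior_iff_mem_nhds.1 hx
  have hlim : Tendsto (fun p : X × X => br p.1 p.2) (𝓝 (x, x)) (𝓝 x) :=
    hexp.tendsto_bracket (by linarith [hexp.1]) (hD.mono fun p hp => hbr p.1 p.2 hp)
  have hclose : ∀ g : X × X → X, Tendsto g (𝓝 (x, x)) (𝓝 x) →
      ∀ᶠ p in 𝓝 (x, x), dist (g p) (br p.1 p.2) < ε := fun g hg =>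
    (hg.dist hlim).eventually (gt_mem_nhds (by rwa [dist_self]))
  obtain ⟨δ, hδ, hnear⟩ := Metric.eventually_nhds_iff.1
    (hD.and ((hclose _ continuousAt_fst).and (hclose _ continuousAt_snd)))
  refine ⟨δ, hδ, fun y z hy hz => ?_⟩
  obtain ⟨hyz, hdy, hdz⟩ := hnear (y := (y, z))
    (by rw [Prod.dist_eq, max_lt_iff, dist_comm y, dist_comm z]; exact ⟨hy, hz⟩)
  obtain ⟨hS, hU⟩ := hbr y z hyz
  exact ⟨hyz, had.mem_locS_of_dist_le (fun n => (hS n).trans hε₀η) hdy.le,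
    had.mem_locU_of_dist_le (fun n => (hU n).trans hε₀η) hdz.le⟩

/-- continuity of the bracket near a point `x` with
`(x,x) ∈ int D_{ε₀}`. -/
theorem bracket_epsilon_continuity (φ : X ≃ₜ X) (εX η lam : ℝ)
    (hexp : IsExpansive φ εX) (had : IsAdapted φ η lam)
    (ε₀ : ℝ) (hε₀ : 0 < ε₀) (hε₀η : ε₀ ≤ η) (hε₀X : ε₀ ≤ εX / 2) (x : X)
    (hx : (x, x) ∈ interior (Dset φ ε₀)) (br : X → X → X)
    (hbr : ∀ y z : X, (y, z) ∈ Dset φ ε₀ → br y z ∈ locS φ y ε₀ ∩ locU φ z ε₀) :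
    ∀ ε : ℝ, 0 < ε → ∃ δ : ℝ, 0 < δ ∧ ∀ y z : X, dist x y < δ → dist x z < δ →
      (y, z) ∈ Dset φ ε₀ ∧ br y z ∈ locS φ y ε ∩ locU φ z ε :=
  bracket_epsilon_continuity_general φ εX η lam hexp had ε₀ hε₀η hε₀X x hx br hbr

end Paper
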